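/- Let G be a finite simple graph in which every vertex has degree exactly 2, let {u1,v1} and {u2,v2} be edges of G with u1, v1, u2, v2 pairwise distinct and with neither {u1,u2} nor {v1,v2} an edge of G, and let G' be the result of the two-switch on these edges. Suppose u1 and u2 lie in the same connected component of G, and v1 and v2 lie in different connected components of the induced subgraph of G on V \ {u1, u2}. Then every vertex of G' has degree exactly 2, and any two vertices lying in the connected component of u1 in G lie in the same connected component of G'. -/

import Mathlib

/-!
Let `H` be `G` with the two switched edges removed; it is a subgraph of both `G` and the switched
graph `G'`. In `H` the vertices `u1, v1, u2, v2` have degree one and all others degree two. Since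
`u1` and `u2` are leaves of `H`, a path of `H` from `v1` to `v2` would avoid them, which the
separation hypothesis forbids. By the handshake lemma the component of `v1` in `H` contains a
second odd vertex, hence `u1` or `u2`, and likewise for `v2`, and these two must differ. Together
with the new edges `u1u2` and `v1v2` this joins `u1` to `v1` and `u2` to `v2` in `G'`, so every
edge of `G` is bridged in `G'`, and components of `G` lie inside components of `G'`.
Degrees are preserved because each endpoint loses one neighbour and gains a new one.
-/

open SimpleGraph Finset
open scoped Classical

/-- The result of the two-switch on the edges `{u1,v1}` and `{u2,v2}` of `G`:
these two edges are deleted and the edges `{u1,u2}` and `{v1,v2}` are inserted. -/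
def twoSwitch {V : Type*} (G : SimpleGraph V) (u1 v1 u2 v2 : V) : SimpleGraph V :=
  SimpleGraph.fromEdgeSet ((G.edgeSet \ {s(u1, v1), s(u2, v2)}) ∪ {s(u1, u2), s(v1, v2)})

namespace SimpleGraph

variable {V : Type*}

lemma reachable_le_of_adj_le_reachable {G G' : SimpleGraph V}
    (h : ∀ a b, G.Adj a b → G'.Reachable a b) : G.Reachable ≤ G'.Reachable := by
  rw [reachable_eq_reflTransGen, reachable_eq_reflTransGen]
  exact Relation.reflTransGen_closed fun a b hab =>
    (reachable_iff_reflTransGen a b).mp (h a b hab)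

lemma neighborSet_subsingleton_of_degree_le_one {G : SimpleGraph V} {v : V}
    [Fintype (G.neighborSet v)] (h : G.degree v ≤ 1) : (G.neighborSet v).Subsingleton := by
  rw [← Set.subsingleton_coe, ← Fintype.card_le_one_iff_subsingleton, card_neighborSet_eq_degree]
  exact h

lemma Reachable.induce_of_subsingleton_neighborSet {G : SimpleGraph V} {s : Set V}
    (hs : ∀ v ∉ s, (G.neighborSet v).Subsingleton) {u v : V} (hu : u ∈ s) (hv : v ∈ s)
    (h : G.Reachable u v) : (G.induce s).Reachable ⟨u, hu⟩ ⟨v, hv⟩ := by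
  obtain ⟨p, hp⟩ := h.exists_isPath
  refine ⟨p.induce s fun w hw => ?_⟩
  by_contra hws
  exact hp.isTrail.not_mem_support_of_subsingleton_neighborSet (by rintro rfl; exact hws hu)
    (by rintro rfl; exact hws hv) (hs w hws) hw

lemma degree_deleteEdges_add_one {G : SimpleGraph V} {s : Set (Sym2 V)} {u v : V}
    [Fintype (G.neighborSet u)] [Fintype ((G.deleteEdges s).neighborSet u)] (h : G.Adj u v)
    (hs : ∀ w, s(u, w) ∈ s ↔ w = v) :
    (G.deleteEdges s).degree u + 1 = G.degree u := by
  rw [← card_neighborFinset_eq_degree, ← card_neighborFinset_eq_degree,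
    ← card_erase_add_one (mem_neighborFinset _ _ _ |>.mpr h)]
  congr 2
  ext w
  simp [hs, and_comm]

lemma degree_deleteEdges_of_forall_notMem {G : SimpleGraph V} {s : Set (Sym2 V)} {u : V}
    [Fintype (G.neighborSet u)] [Fintype ((G.deleteEdges s).neighborSet u)]
    (hs : ∀ w, s(u, w) ∉ s) : (G.deleteEdges s).degree u = G.degree u := by
  rw [← card_neighborFinset_eq_degree, ← card_neighborFinset_eq_degree]
  congr 1
  ext w
  simp [hs]

lemma exists_ne_reachable_odd_degree [Fintype V] {G : SimpleGraph V} [DecidableRel G.Adj]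
    {v : V} (hv : Odd (G.degree v)) : ∃ w, w ≠ v ∧ G.Reachable v w ∧ Odd (G.degree w) := by
  set C := G.connectedComponentMk v
  have hdeg (x : C.supp) : (G.induce C.supp).degree x = G.degree x :=
    degree_induce_of_neighborSet_subset fun _ hy => C.mem_supp_of_adj_mem_supp x.2 hy
  obtain ⟨w, hwv, hw⟩ :=
    (G.induce C.supp).exists_ne_odd_degree_of_exists_odd_degree ⟨v, rfl⟩ (by rwa [hdeg])
  exact ⟨w, fun h => hwv (Subtype.ext h), ConnectedComponent.exact w.2.symm, by rwa [← hdeg]⟩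

lemma reachable_of_odd_degree_of_not_reachable [Fintype V] {G : SimpleGraph V}
    [DecidableRel G.Adj] {u1 v1 u2 v2 : V} (hv1 : Odd (G.degree v1)) (hv2 : Odd (G.degree v2))
    (hodd : ∀ w, Odd (G.degree w) → w = u1 ∨ w = v1 ∨ w = u2 ∨ w = v2)
    (hsep : ¬ G.Reachable v1 v2) :
    (G.Reachable v1 u1 ∧ G.Reachable v2 u2) ∨ (G.Reachable v1 u2 ∧ G.Reachable v2 u1) := by
  have h1 : G.Reachable v1 u1 ∨ G.Reachable v1 u2 := by
    obtain ⟨w, hwv, hr, hw⟩ := exists_ne_reachable_odd_degree hv1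
    rcases hodd w hw with rfl | rfl | rfl | rfl
    exacts [Or.inl hr, absurd rfl hwv, Or.inr hr, absurd hr hsep]
  have h2 : G.Reachable v2 u1 ∨ G.Reachable v2 u2 := by
    obtain ⟨w, hwv, hr, hw⟩ := exists_ne_reachable_odd_degree hv2
    rcases hodd w hw with rfl | rfl | rfl | rfl
    exacts [Or.inl hr, absurd hr.symm hsep, Or.inr hr, absurd rfl hwv]
  rcases h1 with r1 | r1 <;> rcases h2 with r2 | r2
  exacts [absurd (r1.trans r2.symm) hsep, Or.inl ⟨r1, r2⟩, Or.inr ⟨r1, r2⟩,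
    absurd (r1.trans r2.symm) hsep]

end SimpleGraph

section TwoSwitch

variable {V : Type*} (G : SimpleGraph V) (u1 v1 u2 v2 : V)

lemma twoSwitch_adj {a b : V} : (twoSwitch G u1 v1 u2 v2).Adj a b ↔
    ((G.deleteEdges {s(u1, v1), s(u2, v2)}).Adj a b ∨ s(a, b) = s(u1, u2) ∨ s(a, b) = s(v1, v2))
      ∧ a ≠ b := by
  simp only [twoSwitch, fromEdgeSet_adj, deleteEdges_adj, Set.mem_union, Set.mem_sdiff,
    mem_edgeSet, Set.mem_insert_iff, Set.mem_singleton_iff]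

lemma twoSwitch_comm : twoSwitch G u1 v1 u2 v2 = twoSwitch G u2 v2 u1 v1 := by
  rw [twoSwitch, twoSwitch, Set.pair_comm s(u1, v1), Sym2.eq_swap (a := u2) (b := u1),
    Sym2.eq_swap (a := v2) (b := v1)]

lemma twoSwitch_swap : twoSwitch G u1 v1 u2 v2 = twoSwitch G v1 u1 v2 u2 := by
  rw [twoSwitch, twoSwitch, Sym2.eq_swap (a := u1) (b := v1), Sym2.eq_swap (a := u2) (b := v2),
    Set.pair_comm s(u1, u2)]

lemma deleteEdges_le_twoSwitch :
    G.deleteEdges {s(u1, v1), s(u2, v2)} ≤ twoSwitch G u1 v1 u2 v2 :=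
  fun _ _ h => (twoSwitch_adj G u1 v1 u2 v2).mpr ⟨Or.inl h, h.ne⟩

lemma twoSwitch_adj_left (h : u1 ≠ u2) : (twoSwitch G u1 v1 u2 v2).Adj u1 u2 :=
  (twoSwitch_adj G u1 v1 u2 v2).mpr ⟨Or.inr (Or.inl rfl), h⟩

lemma twoSwitch_reachable_of_deleteEdges_reachable (h13 : u1 ≠ u2)
    (h : ((G.deleteEdges {s(u1, v1), s(u2, v2)}).Reachable v1 u1 ∧
        (G.deleteEdges {s(u1, v1), s(u2, v2)}).Reachable v2 u2) ∨
      ((G.deleteEdges {s(u1, v1), s(u2, v2)}).Reachable v1 u2 ∧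
        (G.deleteEdges {s(u1, v1), s(u2, v2)}).Reachable v2 u1)) :
    (twoSwitch G u1 v1 u2 v2).Reachable u1 v1 ∧ (twoSwitch G u1 v1 u2 v2).Reachable u2 v2 := by
  have hle := deleteEdges_le_twoSwitch G u1 v1 u2 v2
  have hu := (twoSwitch_adj_left G u1 v1 u2 v2 h13).reachable
  rcases h with ⟨r1, r2⟩ | ⟨r1, r2⟩
  · exact ⟨(r1.mono hle).symm, (r2.mono hle).symm⟩
  · exact ⟨hu.trans (r1.mono hle).symm, hu.symm.trans (r2.mono hle).symm⟩

lemma reachable_le_reachable_twoSwitch (hu : (twoSwitch G u1 v1 u2 v2).Reachable u1 v1)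
    (hv : (twoSwitch G u1 v1 u2 v2).Reachable u2 v2) :
    G.Reachable ≤ (twoSwitch G u1 v1 u2 v2).Reachable := by
  refine reachable_le_of_adj_le_reachable fun a b hab => ?_
  by_cases he : s(a, b) ∈ ({s(u1, v1), s(u2, v2)} : Set (Sym2 V))
  · simp only [Set.mem_insert_iff, Set.mem_singleton_iff, Sym2.eq_iff] at he
    rcases he with (⟨rfl, rfl⟩ | ⟨rfl, rfl⟩) | (⟨rfl, rfl⟩ | ⟨rfl, rfl⟩)
    exacts [hu, hu.symm, hv, hv.symm]
  · exact (deleteEdges_le_twoSwitch G u1 v1 u2 v2 (deleteEdges_adj.mpr ⟨hab, he⟩)).reachable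

lemma mk_mem_pair_iff {a b : V} : s(a, b) ∈ ({s(u1, v1), s(u2, v2)} : Set (Sym2 V)) ↔
    (a = u1 ∧ b = v1 ∨ a = v1 ∧ b = u1) ∨ (a = u2 ∧ b = v2 ∨ a = v2 ∧ b = u2) := by
  simp only [Set.mem_insert_iff, Set.mem_singleton_iff, Sym2.eq_iff]

variable [Fintype V]

lemma neighborFinset_twoSwitch_left (h12 : u1 ≠ v1) (h13 : u1 ≠ u2) (h14 : u1 ≠ v2) :
    (twoSwitch G u1 v1 u2 v2).neighborFinset u1 =
      insert u2 ((G.deleteEdges {s(u1, v1), s(u2, v2)}).neighborFinset u1) := by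
  ext b
  simp only [mem_neighborFinset, twoSwitch_adj, mem_insert, Sym2.eq_iff]
  grind [Adj.ne]

lemma neighborFinset_twoSwitch_of_ne {w : V} (hw1 : w ≠ u1) (hw2 : w ≠ v1) (hw3 : w ≠ u2)
    (hw4 : w ≠ v2) :
    (twoSwitch G u1 v1 u2 v2).neighborFinset w =
      (G.deleteEdges {s(u1, v1), s(u2, v2)}).neighborFinset w := by
  ext b
  simp only [mem_neighborFinset, twoSwitch_adj, Sym2.eq_iff]
  grind [Adj.ne]

lemma degree_deleteEdges_pair_of_mem (h1 : G.Adj u1 v1) (h2 : G.Adj u2 v2) (h13 : u1 ≠ u2)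
    (h14 : u1 ≠ v2) (h23 : v1 ≠ u2) (h24 : v1 ≠ v2) {w : V}
    (hw : w = u1 ∨ w = v1 ∨ w = u2 ∨ w = v2) :
    (G.deleteEdges {s(u1, v1), s(u2, v2)}).degree w + 1 = G.degree w := by
  rcases hw with rfl | rfl | rfl | rfl
  · exact degree_deleteEdges_add_one h1 (by simp only [mk_mem_pair_iff]; grind)
  · exact degree_deleteEdges_add_one h1.symm (by simp only [mk_mem_pair_iff]; grind)
  · exact degree_deleteEdges_add_one h2 (by simp only [mk_mem_pair_iff]; grind)
  · exact degree_deleteEdges_add_one h2.symm (by simp only [mk_mem_pair_iff]; grind)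

lemma degree_deleteEdges_pair_of_ne {w : V} (hw1 : w ≠ u1) (hw2 : w ≠ v1) (hw3 : w ≠ u2)
    (hw4 : w ≠ v2) : (G.deleteEdges {s(u1, v1), s(u2, v2)}).degree w = G.degree w :=
  degree_deleteEdges_of_forall_notMem (by simp only [mk_mem_pair_iff]; grind)

lemma degree_twoSwitch_left (h1 : G.Adj u1 v1) (h13 : u1 ≠ u2) (h14 : u1 ≠ v2)
    (hnu : ¬ G.Adj u1 u2) : (twoSwitch G u1 v1 u2 v2).degree u1 = G.degree u1 := by
  rw [← card_neighborFinset_eq_degree, neighborFinset_twoSwitch_left G u1 v1 u2 v2 h1.ne h13 h14,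
    card_insert_of_notMem (by simp [hnu]), card_neighborFinset_eq_degree,
    degree_deleteEdges_add_one h1 (by simp only [mk_mem_pair_iff]; grind)]

lemma degree_twoSwitch (h1 : G.Adj u1 v1) (h2 : G.Adj u2 v2) (h13 : u1 ≠ u2) (h14 : u1 ≠ v2)
    (h23 : v1 ≠ u2) (h24 : v1 ≠ v2) (hnu : ¬ G.Adj u1 u2) (hnv : ¬ G.Adj v1 v2) (w : V) :
    (twoSwitch G u1 v1 u2 v2).degree w = G.degree w := by
  by_cases hw : w = u1 ∨ w = v1 ∨ w = u2 ∨ w = v2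
  · rcases hw with rfl | rfl | rfl | rfl
    · exact degree_twoSwitch_left G _ _ _ _ h1 h13 h14 hnu
    · rw [twoSwitch_swap]
      exact degree_twoSwitch_left G _ _ _ _ h1.symm h24 h23 hnv
    · rw [twoSwitch_comm]
      exact degree_twoSwitch_left G _ _ _ _ h2 h13.symm h23.symm (fun h => hnu h.symm)
    · rw [twoSwitch_comm, twoSwitch_swap]
      exact degree_twoSwitch_left G _ _ _ _ h2.symm h24.symm h14.symm (fun h => hnv h.symm)
  · push Not at hw
    obtain ⟨hw1, hw2, hw3, hw4⟩ := hw
    rw [← card_neighborFinset_eq_degree,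
      neighborFinset_twoSwitch_of_ne G u1 v1 u2 v2 hw1 hw2 hw3 hw4, card_neighborFinset_eq_degree,
      degree_deleteEdges_pair_of_ne G u1 v1 u2 v2 hw1 hw2 hw3 hw4]

end TwoSwitch

theorem stmt_5_general {V : Type*} [Fintype V] (G : SimpleGraph V)
    (hdeg : ∀ v : V, G.degree v = 2)
    (u1 v1 u2 v2 : V)
    (h1 : G.Adj u1 v1) (h2 : G.Adj u2 v2)
    (hd13 : u1 ≠ u2) (hd14 : u1 ≠ v2)
    (hd23 : v1 ≠ u2) (hd24 : v1 ≠ v2)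
    (hnu : ¬ G.Adj u1 u2) (hnv : ¬ G.Adj v1 v2)
    (hdiff : ∀ (hv1 : v1 ∈ ({u1, u2}ᶜ : Set V)) (hv2 : v2 ∈ ({u1, u2}ᶜ : Set V)),
      ¬ (G.induce ({u1, u2}ᶜ : Set V)).Reachable ⟨v1, hv1⟩ ⟨v2, hv2⟩) :
    (∀ v : V, (twoSwitch G u1 v1 u2 v2).degree v = 2) ∧
    ∀ x y : V, G.Reachable u1 x → G.Reachable u1 y →
      (twoSwitch G u1 v1 u2 v2).Reachable x y := by
  set H := G.deleteEdges {s(u1, v1), s(u2, v2)}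
  have hH_one {w : V} (hw : w = u1 ∨ w = v1 ∨ w = u2 ∨ w = v2) : H.degree w = 1 := by
    have := degree_deleteEdges_pair_of_mem G u1 v1 u2 v2 h1 h2 hd13 hd14 hd23 hd24 hw
    rw [hdeg] at this
    exact Nat.succ_injective this
  have hH_odd (w : V) (hw : Odd (H.degree w)) : w = u1 ∨ w = v1 ∨ w = u2 ∨ w = v2 := by
    by_contra! hne
    rw [degree_deleteEdges_pair_of_ne G u1 v1 u2 v2 hne.1 hne.2.1 hne.2.2.1 hne.2.2.2, hdeg] at hw
    exact Nat.not_odd_iff_even.mpr even_two hw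
  have hleaf (w : V) (hw : w ∉ ({u1, u2}ᶜ : Set V)) : (H.neighborSet w).Subsingleton := by
    refine neighborSet_subsingleton_of_degree_le_one (hH_one ?_).le
    simp only [Set.mem_compl_iff, Set.mem_insert_iff, Set.mem_singleton_iff, not_not] at hw
    tauto
  have hv1 : v1 ∈ ({u1, u2}ᶜ : Set V) := by simp [h1.ne.symm, hd23]
  have hv2 : v2 ∈ ({u1, u2}ᶜ : Set V) := by simp [hd14.symm, h2.ne.symm]
  have hsep : ¬ H.Reachable v1 v2 := fun h => hdiff hv1 hv2
    ((h.induce_of_subsingleton_neighborSet hleaf hv1 hv2).mono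
      (comap_monotone _ (G.deleteEdges_le _)))
  obtain ⟨hu, hv⟩ := twoSwitch_reachable_of_deleteEdges_reachable G u1 v1 u2 v2 hd13
    (reachable_of_odd_degree_of_not_reachable (by rw [hH_one (by simp)]; exact odd_one)
      (by rw [hH_one (by simp)]; exact odd_one) hH_odd hsep)
  have hreach := reachable_le_reachable_twoSwitch G u1 v1 u2 v2 hu hv
  exact ⟨fun v => (degree_twoSwitch G u1 v1 u2 v2 h1 h2 hd13 hd14 hd23 hd24 hnu hnv v).trans
    (hdeg v), fun x y hx hy => (hreach _ _ hx).symm.trans (hreach _ _ hy)⟩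

/-- a two-switch on edges of the same cycle whose endpoints `v1, v2` lie on
different paths from `u1` to `u2` keeps the vertices of the cycle in a single cycle. -/
theorem stmt_5 {V : Type*} [Fintype V] (G : SimpleGraph V)
    (hdeg : ∀ v : V, G.degree v = 2)
    (u1 v1 u2 v2 : V)
    (h1 : G.Adj u1 v1) (h2 : G.Adj u2 v2)
    (hd12 : u1 ≠ v1) (hd13 : u1 ≠ u2) (hd14 : u1 ≠ v2)
    (hd23 : v1 ≠ u2) (hd24 : v1 ≠ v2) (hd34 : u2 ≠ v2)
    (hnu : ¬ G.Adj u1 u2) (hnv : ¬ G.Adj v1 v2)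
    (hcomp : G.Reachable u1 u2)
    (hdiff : ∀ (hv1 : v1 ∈ ({u1, u2}ᶜ : Set V)) (hv2 : v2 ∈ ({u1, u2}ᶜ : Set V)),
      ¬ (G.induce ({u1, u2}ᶜ : Set V)).Reachable ⟨v1, hv1⟩ ⟨v2, hv2⟩) :
    (∀ v : V, (twoSwitch G u1 v1 u2 v2).degree v = 2) ∧
    ∀ x y : V, G.Reachable u1 x → G.Reachable u1 y →
      (twoSwitch G u1 v1 u2 v2).Reachable x y :=
  stmt_5_general G hdeg u1 v1 u2 v2 h1 h2 hd13 hd14 hd23 hd24 hnu hnv hdiff
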